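/- Main Theorem: For every natural number n ≥ 2 and every real number x ≥ 1, the sequence of truncated nth-root nested radicals R m x converges to x + 1 as m → ∞; that is, x + 1 = (∑_{k=0}^{n-2} C(n,k) x^k + x^{n-1}(∑_{k=0}^{n-2} C(n,k)(x+n-1)^k + (x+n-1)^{n-1}(...)^{1/n})^{1/n})^{1/n}. -/

import Mathlib

/-!
Since `∑_{k<n-1} C(n,k) y^k + y^(n-1) (y + n) = (y + 1)^n`, the value `y + 1` is a fixed point of
the recursion, and induction gives `R n m y ≤ y + 1`. Conversely, if the inner radical is at least
`(y + n) / s` with `s ≥ 1`, the outer one is at least `(y + 1) / s^(1/n)`: each level of nesting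
takes the `n`th root of the defect. Starting from `R n 1 y ≥ 1`, the defect after `m` more levels
is `(y + 1 + (n - 1) m)^(1/n^m)`, which tends to `1`.
-/

noncomputable def R (n : ℕ) : ℕ → ℝ → ℝ
  | 0, _ => 0
  | m + 1, y =>
      (∑ k ∈ Finset.range (n - 1), (n.choose k : ℝ) * y ^ k
        + y ^ (n - 1) * R n m (y + n - 1)) ^ (1 / n : ℝ)

open Filter Topology Finset

noncomputable def binomialHead (n : ℕ) (y : ℝ) : ℝ :=
  ∑ k ∈ range (n - 1), (n.choose k : ℝ) * y ^ k

theorem binomialHead_add_pow_mul {n : ℕ} (hn : 1 ≤ n) (y : ℝ) :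
    binomialHead n y + y ^ (n - 1) * (y + n) = (y + 1) ^ n := by
  obtain ⟨p, rfl⟩ : ∃ p, n = p + 1 := ⟨n - 1, by omega⟩
  rw [binomialHead, add_pow, sum_range_succ, sum_range_succ]
  simp only [Nat.add_sub_cancel, one_pow, mul_one, Nat.choose_self, Nat.choose_succ_self_right]
  push_cast
  rw [sum_congr rfl fun k _ => mul_comm (y ^ k) _]
  ring

theorem binomialHead_nonneg (n : ℕ) {y : ℝ} (hy : 0 ≤ y) : 0 ≤ binomialHead n y :=
  sum_nonneg fun _ _ => by positivity

theorem one_le_binomialHead {n : ℕ} (hn : 2 ≤ n) {y : ℝ} (hy : 0 ≤ y) : 1 ≤ binomialHead n y := by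
  have h0 : 0 ∈ range (n - 1) := mem_range.mpr (by omega)
  simpa [binomialHead] using single_le_sum (f := fun k => (n.choose k : ℝ) * y ^ k)
    (fun _ _ => by positivity) h0

theorem R_succ (n m : ℕ) (y : ℝ) :
    R n (m + 1) y = (binomialHead n y + y ^ (n - 1) * R n m (y + n - 1)) ^ (1 / n : ℝ) :=
  rfl

theorem R_nonneg {n : ℕ} (hn : 1 ≤ n) (m : ℕ) {y : ℝ} (hy : 0 ≤ y) : 0 ≤ R n m y := by
  induction m generalizing y with
  | zero => rfl
  | succ m ih =>
    have hz : 0 ≤ y + n - 1 := by linarith [show (1 : ℝ) ≤ n by exact_mod_cast hn]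
    rw [R_succ]
    have := binomialHead_nonneg n hy
    have := ih hz
    positivity

theorem R_le_add_one {n : ℕ} (hn : 1 ≤ n) (m : ℕ) {y : ℝ} (hy : 0 ≤ y) : R n m y ≤ y + 1 := by
  induction m generalizing y with
  | zero => simp only [R]; linarith
  | succ m ih =>
    have hz : 0 ≤ y + n - 1 := by linarith [show (1 : ℝ) ≤ n by exact_mod_cast hn]
    have hinner : R n m (y + n - 1) ≤ y + n := by linarith [ih hz]
    calc R n (m + 1) y
        ≤ ((y + 1) ^ n) ^ (1 / n : ℝ) := by
          rw [R_succ, ← binomialHead_add_pow_mul hn]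
          have := binomialHead_nonneg n hy
          have := R_nonneg hn m hz
          gcongr
      _ = y + 1 := by rw [one_div, Real.pow_rpow_inv_natCast (by linarith) (by omega)]

theorem div_rpow_le_R_succ {n : ℕ} (hn : 1 ≤ n) (m : ℕ) {y s : ℝ} (hy : 0 ≤ y) (hs : 1 ≤ s)
    (h : (y + n) / s ≤ R n m (y + n - 1)) : (y + 1) / s ^ (1 / n : ℝ) ≤ R n (m + 1) y := by
  have hs0 : 0 ≤ s := by linarith
  have hS := binomialHead_nonneg n hy
  have hroot : (y + 1) / s ^ (1 / n : ℝ) = ((y + 1) ^ n / s) ^ (1 / n : ℝ) := by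
    rw [Real.div_rpow (by positivity) hs0, one_div,
      Real.pow_rpow_inv_natCast (by linarith) (by omega)]
  rw [hroot, R_succ]
  gcongr
  calc (y + 1) ^ n / s
      = binomialHead n y / s + y ^ (n - 1) * ((y + n) / s) := by
        rw [← binomialHead_add_pow_mul hn]; ring
    _ ≤ binomialHead n y + y ^ (n - 1) * R n m (y + n - 1) := by
        gcongr
        exact div_le_self hS hs

theorem div_rpow_le_R {n : ℕ} (hn : 2 ≤ n) (m : ℕ) {y : ℝ} (hy : 0 ≤ y) :
    (y + 1) / (y + 1 + (n - 1) * m) ^ (1 / (n : ℝ) ^ m) ≤ R n (m + 1) y := by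
  have hn1 : (1 : ℝ) ≤ n := by exact_mod_cast (by omega : 1 ≤ n)
  induction m generalizing y with
  | zero =>
    rw [R_succ]
    simp only [Nat.cast_zero, mul_zero, add_zero, pow_zero, div_one, Real.rpow_one,
      div_self (by linarith : y + 1 ≠ 0), R]
    exact Real.one_le_rpow (one_le_binomialHead hn hy) (by positivity)
  | succ m ih =>
    have hK : 1 ≤ y + 1 + (n - 1) * (m + 1 : ℕ) := by
      have : (0 : ℝ) ≤ (n - 1) * (m + 1 : ℕ) := mul_nonneg (by linarith) (by positivity)
      linarith
    have hinner := ih (y := y + n - 1) (by linarith)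
    rw [show y + n - 1 + 1 = y + n by ring,
      show y + n + (n - 1) * m = y + 1 + (n - 1) * (m + 1 : ℕ) by push_cast; ring] at hinner
    have hstep := div_rpow_le_R_succ (by omega) (m + 1) hy
      (Real.one_le_rpow hK (by positivity)) hinner
    rwa [← Real.rpow_mul (by linarith), one_div_mul_one_div, ← pow_succ] at hstep

theorem tendsto_add_mul_rpow_one_div_pow {a b c : ℝ} (ha : 1 ≤ a) (hb : 0 ≤ b) (hc : 1 < c) :
    Tendsto (fun m : ℕ => (a + b * m) ^ (1 / c ^ m)) atTop (𝓝 1) := by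
  have hupper : Tendsto (fun m : ℕ => 1 + ((a - 1) * ((m : ℝ) ^ 0 / c ^ m)
      + b * ((m : ℝ) ^ 1 / c ^ m))) atTop (𝓝 1) := by
    simpa using (((tendsto_pow_const_div_const_pow_of_one_lt 0 hc).const_mul (a - 1)).add
      ((tendsto_pow_const_div_const_pow_of_one_lt 1 hc).const_mul b)).const_add 1
  have hbm (m : ℕ) : 0 ≤ b * m := by positivity
  refine tendsto_of_tendsto_of_tendsto_of_le_of_le tendsto_const_nhds hupper
    (fun m => Real.one_le_rpow (by linarith [hbm m]) (by positivity)) (fun m => ?_)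
  have hcm : 1 ≤ c ^ m := one_le_pow₀ hc.le
  calc (a + b * m) ^ (1 / c ^ m)
      = (1 + (a - 1 + b * m)) ^ (1 / c ^ m) := by ring_nf
    _ ≤ 1 + 1 / c ^ m * (a - 1 + b * m) :=
        rpow_one_add_le_one_add_mul_self (by linarith [hbm m]) (by positivity)
          (div_le_one_of_le₀ hcm (by positivity))
    _ = _ := by simp only [pow_zero, pow_one]; ring

theorem nested_nth_root_radical_eq (n : ℕ) (hn : 2 ≤ n) (x : ℝ) (hx : 1 ≤ x) :
    Filter.Tendsto (fun m => R n m x) Filter.atTop (nhds (x + 1)) := by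
  have hx0 : 0 ≤ x := by linarith
  have hn2 : (2 : ℝ) ≤ n := by exact_mod_cast hn
  have hdefect := tendsto_add_mul_rpow_one_div_pow (a := x + 1) (b := n - 1) (c := n)
    (by linarith) (by linarith) (by linarith)
  have hlower := tendsto_const_nhds (x := x + 1) |>.div hdefect one_ne_zero
  rw [div_one] at hlower
  rw [← tendsto_add_atTop_iff_nat 1]
  exact tendsto_of_tendsto_of_tendsto_of_le_of_le hlower tendsto_const_nhds
    (fun m => div_rpow_le_R hn m hx0) (fun m => R_le_add_one (by omega) (m + 1) hx0)
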